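/- arXiv:2605.14241 — 3 statements merged into one kernel-verified Lean document; each statement's English description precedes it below -/
import Mathlib

section
/- Fix a trade-off weight α ∈ (0,1) and consider the two-arm setting. The additive latency-quality score prefers the faster, lower-quality arm 2 while the renewal-reward score prefers arm 1 — that is, r₂ > r₁ and V₁ > V₂ both hold — if and only if the quality gap Δu lies in the open interval ( u₂·Δτ̃/(1+τ̃₂) , ((1−α)/α)·Δτ̃ ). -/
/-- In the two-arm setting with trade-off weight `α ∈ (0,1)`,
the additive score prefers the faster, lower-quality arm 2 (`r₂ > r₁`) while
the renewal-reward score prefers arm 1 (`V₁ > V₂`) **iff** the quality gap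
`Δu = u₁ - u₂` lies in the open interval
`( u₂·Δτ̃/(1+τ̃₂) , ((1−α)/α)·Δτ̃ )`. -/
theorem additive_renewal_disagreement_iff
    (α u₁ u₂ τ₁ τ₂ : ℝ)
    (hα : α ∈ Set.Ioo (0 : ℝ) 1)
    (hu₁ : u₁ ∈ Set.Icc (0 : ℝ) 1) (hu₂ : u₂ ∈ Set.Icc (0 : ℝ) 1)
    (hτ₁ : τ₁ ∈ Set.Icc (0 : ℝ) 1) (hτ₂ : τ₂ ∈ Set.Icc (0 : ℝ) 1)
    (hτ : τ₁ > τ₂) :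
    (α * u₂ - (1 - α) * τ₂ > α * u₁ - (1 - α) * τ₁ ∧
      u₁ / (1 + τ₁) > u₂ / (1 + τ₂)) ↔
    (u₂ * (τ₁ - τ₂) / (1 + τ₂) < u₁ - u₂ ∧
      u₁ - u₂ < ((1 - α) / α) * (τ₁ - τ₂)) := by
  obtain ⟨hα0, hα1⟩ := hα
  have h1 : (0:ℝ) < 1 + τ₁ := by linarith [hτ₁.1]
  have h2 : (0:ℝ) < 1 + τ₂ := by linarith [hτ₂.1]
  constructor
  · rintro ⟨ha, hb⟩
    rw [gt_iff_lt, div_lt_div_iff₀ h2 h1] at hb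
    constructor
    · rw [div_lt_iff₀ h2]; nlinarith
    · rw [div_mul_eq_mul_div, lt_div_iff₀ hα0]; nlinarith
  · rintro ⟨ha, hb⟩
    rw [div_lt_iff₀ h2] at ha
    rw [div_mul_eq_mul_div, lt_div_iff₀ hα0] at hb
    constructor
    · nlinarith
    · rw [gt_iff_lt, div_lt_div_iff₀ h2 h1]; nlinarith
end

section
/- For every trade-off weight α ∈ (0,1) there exists a two-arm instance — qualities u₁, u₂ ∈ [0,1] with u₁ > u₂ and normalized latencies τ̃₁, τ̃₂ ∈ [0,1] with τ̃₁ > τ̃₂ — such that the additive score ranks the lower-quality faster arm higher, α·u₂ − (1−α)·τ̃₂ > α·u₁ − (1−α)·τ̃₁, while the renewal-reward score ranks the higher-quality arm higher, u₁/(1+τ̃₁) > u₂/(1+τ̃₂). -/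
/-- For every trade-off weight `α ∈ (0,1)` there is a two-arm
instance (qualities `u₁ > u₂` in `[0,1]`, normalized latencies `τ̃₁ > τ̃₂` in
`[0,1]`) on which the additive score prefers the lower-quality faster arm 2
while the renewal-reward score prefers the higher-quality arm 1. -/
theorem additive_renewal_separation
    (α : ℝ) (hα : α ∈ Set.Ioo (0 : ℝ) 1) :
    ∃ u₁ u₂ τ₁ τ₂ : ℝ,
      u₁ ∈ Set.Icc (0 : ℝ) 1 ∧ u₂ ∈ Set.Icc (0 : ℝ) 1 ∧ u₁ > u₂ ∧
      τ₁ ∈ Set.Icc (0 : ℝ) 1 ∧ τ₂ ∈ Set.Icc (0 : ℝ) 1 ∧ τ₁ > τ₂ ∧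
      α * u₂ - (1 - α) * τ₂ > α * u₁ - (1 - α) * τ₁ ∧
      u₁ / (1 + τ₁) > u₂ / (1 + τ₂) := by
  obtain ⟨h0, h1⟩ := hα
  refine ⟨1 - α, (1 - α) / 4, 1, 0, ⟨by linarith, by linarith⟩,
    ⟨by linarith, by linarith⟩, by linarith, ⟨by norm_num, by norm_num⟩,
    ⟨by norm_num, by norm_num⟩, by norm_num, by nlinarith, ?_⟩
  rw [gt_iff_lt, div_lt_div_iff₀ (by norm_num) (by norm_num)]
  nlinarith
end

section
/- Characterisation under linear-cycle calibration: let T : [0,1] × [0,∞) → ℝ satisfy (i) non-compensation: T(0,z) = 0 for all z ≥ 0 and T(u,z) > 0 for all u ∈ (0,1] and z ≥ 0; (ii) for each z ≥ 0 the map u ↦ T(u,z) is strictly increasing on [0,1]; (iii) for each u ∈ [0,1] the map z ↦ T(u,z) is antitone (nonincreasing) on [0,∞); and (iv) linear-cycle scale invariance: there is a function F : (0,∞) → (0,∞) with T(u,z₁) = F((1+z₂)/(1+z₁))·T(u,z₂) for all u ∈ (0,1] and z₁, z₂ ≥ 0. Then there exist α ≥ 0 and a strictly increasing function φ : [0,1]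 → [0,∞) with φ(0) = 0 such that T(u,z) = φ(u)·(1+z)^(−α) for all u ∈ [0,1] and z ≥ 0; that is, up to a monotone transformation φ of the quality scale, the score is the renewal-reward rate u·(1+z)^(−α). -/
/-!
Taking `z₂ = 0` in the invariance gives `T(u, z) = F(1/(1+z)) · T(u, 0)`: every quality level
shares the latency profile of `u = 1`, so `φ(u) = T(u, 0)`. In the cycle length `y = 1 + z` that
profile `h(y) = T(1, y - 1) / T(1, 0)` is multiplicative and antitone on `[1, ∞)`, so
`t ↦ log h(eᵗ)` is a monotone solution of Cauchy's equation on `[0, ∞)`, hence linear, and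
`h(y) = y^(-α)` with `α = -log h(e) ≥ 0`.
-/

open Set Real

theorem map_natCast_mul_of_map_add_nonneg {g : ℝ → ℝ}
    (hadd : ∀ s t, 0 ≤ s → 0 ≤ t → g (s + t) = g s + g t) (n : ℕ) {t : ℝ} (ht : 0 ≤ t) :
    g (n * t) = n * g t := by
  induction n with
  | zero => simpa using hadd 0 0 le_rfl le_rfl
  | succ n ih =>
    push_cast
    rw [add_mul, one_mul, hadd _ _ (by positivity) ht, ih]
    ring

theorem AntitoneOn.eq_mul_of_map_add_nonneg {g : ℝ → ℝ} (hg : AntitoneOn g (Ici 0))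
    (hadd : ∀ s t, 0 ≤ s → 0 ≤ t → g (s + t) = g s + g t) {t : ℝ} (ht : 0 ≤ t) :
    g t = g 1 * t := by
  have hnat (n : ℕ) : g n = n * g 1 := by
    simpa using map_natCast_mul_of_map_add_nonneg hadd n zero_le_one
  have hg0 : g 0 = 0 := by simpa using hnat 0
  have hg1 : g 1 ≤ 0 := by
    simpa [hg0] using hg (mem_Ici.2 le_rfl) (mem_Ici.2 zero_le_one) zero_le_one
  -- Comparing `n * t` with its integer part pins `n * g t` to within `|g 1|` of `n * t * g 1`.
  have hpinch (n : ℕ) : |n * (g t - g 1 * t)| ≤ -g 1 := by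
    set k := ⌊(n : ℝ) * t⌋₊
    have hk : (k : ℝ) ≤ n * t := Nat.floor_le (by positivity)
    have hk' : (n : ℝ) * t < k + 1 := Nat.lt_floor_add_one _
    have hup : n * g t ≤ k * g 1 := by
      rw [← map_natCast_mul_of_map_add_nonneg hadd n ht, ← hnat]
      exact hg (mem_Ici.2 (Nat.cast_nonneg k)) (mem_Ici.2 (by positivity)) hk
    have hlow : (k + 1) * g 1 ≤ n * g t := by
      rw [← map_natCast_mul_of_map_add_nonneg hadd n ht]
      have := hg (mem_Ici.2 (by positivity)) (mem_Ici.2 (by positivity)) hk'.le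
      rwa [← Nat.cast_add_one, hnat, Nat.cast_add_one] at this
    rw [abs_le]
    constructor <;> nlinarith
  by_contra hne
  have hpos : 0 < |g t - g 1 * t| := abs_pos.mpr (sub_ne_zero.mpr hne)
  obtain ⟨n, hn⟩ := exists_nat_gt (-g 1 / |g t - g 1 * t|)
  have := hpinch n
  rw [abs_mul, Nat.abs_cast, div_lt_iff₀ hpos] at *
  linarith

theorem AntitoneOn.exists_eq_rpow_neg_of_map_mul {H : ℝ → ℝ} (hH : AntitoneOn H (Ici 1))
    (hpos : ∀ y, 1 ≤ y → 0 < H y) (hmul : ∀ x y, 1 ≤ x → 1 ≤ y → H (x * y) = H x * H y) :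
    ∃ α : ℝ, 0 ≤ α ∧ ∀ y, 1 ≤ y → H y = y ^ (-α) := by
  set g : ℝ → ℝ := fun t => log (H (exp t))
  have hadd (s t : ℝ) (hs : 0 ≤ s) (ht : 0 ≤ t) : g (s + t) = g s + g t := by
    simp only [g, exp_add, hmul _ _ (one_le_exp hs) (one_le_exp ht)]
    exact log_mul (hpos _ (one_le_exp hs)).ne' (hpos _ (one_le_exp ht)).ne'
  have hg : AntitoneOn g (Ici 0) := fun s hs t ht hst =>
    log_le_log (hpos _ (one_le_exp ht)) <|
      hH (mem_Ici.2 (one_le_exp hs)) (mem_Ici.2 (one_le_exp ht)) (exp_le_exp.2 hst)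
  have hlin := fun t (ht : 0 ≤ t) => hg.eq_mul_of_map_add_nonneg hadd ht
  have hg1 : g 1 ≤ 0 := by
    simpa [hlin 0 le_rfl] using hg (mem_Ici.2 le_rfl) (mem_Ici.2 zero_le_one) zero_le_one
  refine ⟨-g 1, neg_nonneg.2 hg1, fun y hy => ?_⟩
  have hy0 : 0 < y := by linarith
  have hlog : 0 ≤ log y := log_nonneg hy
  calc H y = exp (g (log y)) := by simp only [g, exp_log hy0, exp_log (hpos y hy)]
    _ = y ^ (-(-g 1)) := by rw [hlin _ hlog, rpow_def_of_pos hy0, neg_neg, mul_comm]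

theorem AntitoneOn.exists_eq_mul_rpow_neg_of_linear_cycle {f F : ℝ → ℝ}
    (hf : AntitoneOn f (Ici 0)) (hpos : ∀ z, 0 ≤ z → 0 < f z)
    (hF : ∀ z₁ z₂, 0 ≤ z₁ → 0 ≤ z₂ → f z₁ = F ((1 + z₂) / (1 + z₁)) * f z₂) :
    ∃ α : ℝ, 0 ≤ α ∧ ∀ z, 0 ≤ z → f z = f 0 * (1 + z) ^ (-α) := by
  have hf0 := hpos 0 le_rfl
  set H : ℝ → ℝ := fun y => f (y - 1) / f 0
  have hH : AntitoneOn H (Ici 1) := fun x hx y hy hxy =>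
    div_le_div_of_nonneg_right
      (hf (mem_Ici.2 (sub_nonneg.2 hx)) (mem_Ici.2 (sub_nonneg.2 hy)) (by linarith)) hf0.le
  have hmul (x y : ℝ) (hx : 1 ≤ x) (hy : 1 ≤ y) : H (x * y) = H x * H y := by
    have hxy := hF (x * y - 1) (y - 1) (by nlinarith) (by linarith)
    have hx1 := hF (x - 1) 0 (by linarith) le_rfl
    have hratio : (1 + (y - 1)) / (1 + (x * y - 1)) = (1 + 0) / (1 + (x - 1)) := by
      have : y ≠ 0 := by positivity
      simp only [add_sub_cancel, add_zero]
      field_simp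
    simp only [H]
    rw [hxy, hx1, hratio]
    field_simp
  obtain ⟨α, hα, hHpow⟩ := hH.exists_eq_rpow_neg_of_map_mul
    (fun y hy => div_pos (hpos _ (by linarith)) hf0) hmul
  refine ⟨α, hα, fun z hz => ?_⟩
  have := hHpow (1 + z) (by linarith)
  simp only [H, add_sub_cancel_left] at this
  rw [← this]
  field_simp

/-- Characterisation under linear-cycle calibration: if
`T : [0,1] × [0,∞) → ℝ` satisfies (i) non-compensation, (ii) strict
monotonicity in quality, (iii) antitonicity in latency, and (iv) linear-cycle
scale invariance via some `F : (0,∞) → (0,∞)`, then there are `α ≥ 0` and a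
strictly increasing `φ : [0,1] → [0,∞)` with `φ(0) = 0` such that
`T(u,z) = φ(u)·(1+z)^(−α)` for all `u ∈ [0,1]`, `z ≥ 0`. -/
theorem linear_cycle_characterisation
    (T : ℝ → ℝ → ℝ)
    (hzero : ∀ z : ℝ, 0 ≤ z → T 0 z = 0)
    (hTpos : ∀ u ∈ Set.Ioc (0 : ℝ) 1, ∀ z : ℝ, 0 ≤ z → 0 < T u z)
    (hmono : ∀ z : ℝ, 0 ≤ z → StrictMonoOn (fun u => T u z) (Set.Icc (0 : ℝ) 1))
    (hanti : ∀ u ∈ Set.Icc (0 : ℝ) 1, ∀ z₁ z₂ : ℝ, 0 ≤ z₁ → z₁ ≤ z₂ →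
      T u z₂ ≤ T u z₁)
    (hscale : ∃ F : ℝ → ℝ, (∀ x : ℝ, 0 < x → 0 < F x) ∧
      ∀ u ∈ Set.Ioc (0 : ℝ) 1, ∀ z₁ z₂ : ℝ, 0 ≤ z₁ → 0 ≤ z₂ →
        T u z₁ = F ((1 + z₂) / (1 + z₁)) * T u z₂) :
    ∃ α : ℝ, 0 ≤ α ∧ ∃ φ : ℝ → ℝ,
      StrictMonoOn φ (Set.Icc (0 : ℝ) 1) ∧
      (∀ u ∈ Set.Icc (0 : ℝ) 1, 0 ≤ φ u) ∧
      φ 0 = 0 ∧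
      ∀ u ∈ Set.Icc (0 : ℝ) 1, ∀ z : ℝ, 0 ≤ z →
        T u z = φ u * (1 + z) ^ (-α) := by
  obtain ⟨F, -, hF⟩ := hscale
  have h1 : (1 : ℝ) ∈ Ioc 0 1 := ⟨zero_lt_one, le_rfl⟩
  obtain ⟨α, hα, hT1⟩ := AntitoneOn.exists_eq_mul_rpow_neg_of_linear_cycle
    (fun z₁ hz₁ z₂ _ hz => hanti 1 (Ioc_subset_Icc_self h1) z₁ z₂ hz₁ hz) (hTpos 1 h1) (hF 1 h1)
  have hprofile (z : ℝ) (hz : 0 ≤ z) : F ((1 + 0) / (1 + z)) = (1 + z) ^ (-α) := by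
    have h10 := hTpos 1 h1 0 le_rfl
    have := (hF 1 h1 z 0 hz le_rfl).symm.trans (hT1 z hz)
    rwa [mul_comm (T 1 0), mul_left_inj' h10.ne'] at this
  refine ⟨α, hα, fun u => T u 0, hmono 0 le_rfl, fun u hu => ?_, hzero 0 le_rfl, fun u hu z hz => ?_⟩
  · rcases hu.1.eq_or_lt with rfl | hu0
    · exact (hzero 0 le_rfl).ge
    · exact (hTpos u ⟨hu0, hu.2⟩ 0 le_rfl).le
  · rcases hu.1.eq_or_lt with rfl | hu0
    · simp [hzero z hz, hzero 0 le_rfl]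
    · rw [hF u ⟨hu0, hu.2⟩ z 0 hz le_rfl, hprofile z hz, mul_comm]
end
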